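/- arXiv:1904.00926 — 3 statements merged into one kernel-verified Lean document; each statement's English description precedes it below -/
import Mathlib

section
/- For complex z with Re z > 0 and y > 0, the modified Bessel function of the first kind satisfies |I_z(y)| ≤ I_{Re z}(y) · e^{π |Im z| / 2}. -/
/-!
Term by term, `‖(y/2)^(z+2k)‖ = (y/2)^(Re z + 2k)`, so everything rests on the lower bound
`|Γ(x + iv)| ≥ e^{-π|v|/2} Γ(x)` for `x ≥ 1`. Comparing Euler's products factor by factor,
`|x + j + iv| / (x + j) ≤ |1 + j + iv| / (1 + j)`, gives `|Γ(x + iv)| ≥ Γ(x) |Γ(1 + iv)|`, and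
the reflection formula gives `|Γ(1 + iv)|² = πv / sinh(πv) ≥ e^{-π|v|}`.
-/

open Complex

/-- Modified Bessel function of the first kind of complex order z at real argument y,
I_z(y) = Σ_{k≥0} (y/2)^{z+2k} / (k! Γ(z+k+1)). -/
noncomputable def besselI (z : ℂ) (y : ℝ) : ℂ :=
  ∑' k : ℕ, ((y:ℂ)/2) ^ (z + 2*(k:ℂ)) / ((k.factorial : ℂ) * Complex.Gamma (z + k + 1))

open scoped Real Nat

namespace Real

lemma sinh_le_mul_exp (t : ℝ) : sinh t ≤ t * exp t := by
  have hsinh : sinh t = (1 - exp (-(2 * t))) / 2 * exp t := by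
    rw [sinh_eq, div_mul_eq_mul_div, sub_mul, ← exp_add]; ring_nf
  rw [hsinh]
  gcongr
  linarith [add_one_le_exp (-(2 * t))]

lemma exp_neg_le_div_sinh {t : ℝ} (ht : 0 < t) : exp (-t) ≤ t / sinh t := by
  rw [le_div_iff₀ (sinh_pos_iff.mpr ht), exp_neg, inv_mul_le_iff₀ (exp_pos t), mul_comm]
  exact sinh_le_mul_exp t

lemma factorial_mul_Gamma_add_one_le {x : ℝ} (hx : 0 ≤ x) (k : ℕ) :
    k ! * Gamma (x + 1) ≤ Gamma (x + k + 1) := by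
  induction k with
  | zero => simp
  | succ k ih =>
    rw [Nat.factorial_succ, Nat.cast_mul, Nat.cast_succ, mul_assoc, ← add_assoc,
      Gamma_add_one (by positivity : x + k + 1 ≠ 0)]
    gcongr
    linarith

end Real

namespace Complex

lemma normSq_Gamma_one_add_mul_I {y : ℝ} (hy : y ≠ 0) :
    normSq (Gamma (1 + y * I)) = π * y / Real.sinh (π * y) := by
  have hyI : (y : ℂ) * I ≠ 0 := mul_ne_zero (ofReal_ne_zero.mpr hy) I_ne_zero
  have hsin : sin (π * (y * I)) = Real.sinh (π * y) * I := by
    rw [← mul_assoc, ← ofReal_mul, sin_mul_I, ofReal_sinh]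
  apply ofReal_injective
  rw [← mul_conj, ← Gamma_conj, map_add, map_one, map_mul, conj_ofReal, conj_I, add_comm,
    Gamma_add_one _ hyI, mul_assoc, mul_neg, ← sub_eq_add_neg, Gamma_mul_Gamma_one_sub, hsin]
  push_cast
  field_simp

lemma exp_neg_le_norm_Gamma_one_add_mul_I (y : ℝ) :
    Real.exp (-(π * |y| / 2)) ≤ ‖Gamma (1 + y * I)‖ := by
  rcases eq_or_ne y 0 with rfl | hy
  · simp
  have hnormSq : normSq (Gamma (1 + y * I)) = π * |y| / Real.sinh (π * |y|) := by
    rw [normSq_Gamma_one_add_mul_I hy]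
    rcases abs_choice y with h | h <;> rw [h]
    rw [mul_neg, Real.sinh_neg, neg_div_neg_eq]
  rw [norm_def, hnormSq, ← neg_div, Real.exp_half]
  exact Real.sqrt_le_sqrt (Real.exp_neg_le_div_sinh (by positivity))

lemma norm_GammaSeq (s : ℂ) {n : ℕ} (hn : 0 < n) :
    ‖GammaSeq s n‖ = n ^ s.re * n ! / ∏ j ∈ Finset.range (n + 1), ‖s + j‖ := by
  rw [GammaSeq, norm_div, norm_mul, norm_prod, norm_natCast_cpow_of_pos hn, norm_natCast]

lemma norm_ofReal_add_mul_I_mul_le (y : ℝ) {a b : ℝ} (ha : 0 ≤ a) (hab : a ≤ b) :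
    ‖(b : ℂ) + y * I‖ * a ≤ ‖(a : ℂ) + y * I‖ * b := by
  refine le_of_sq_le_sq ?_ (mul_nonneg (norm_nonneg _) (ha.trans hab))
  rw [mul_pow, mul_pow, Complex.sq_norm, Complex.sq_norm, normSq_add_mul_I, normSq_add_mul_I]
  nlinarith [mul_le_mul_of_nonneg_left (pow_le_pow_left₀ ha hab 2) (sq_nonneg y)]

open Finset in
lemma norm_GammaSeq_one_add_mul_I_mul_le {x : ℝ} (y : ℝ) (hx : 1 ≤ x) {n : ℕ} (hn : 0 < n) :
    ‖GammaSeq (1 + y * I) n‖ * ‖GammaSeq x n‖ ≤ ‖GammaSeq (x + y * I) n‖ * ‖GammaSeq 1 n‖ := by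
  have hshift (a : ℝ) (j : ℕ) : (a : ℂ) + y * I + j = ((a + j : ℝ) : ℂ) + y * I := by
    push_cast; ring
  have hreal (a : ℝ) (j : ℕ) (ha : 0 ≤ a) : ‖(a : ℂ) + j‖ = a + j := by
    rw [← ofReal_natCast, ← ofReal_add, Complex.norm_of_nonneg (by positivity)]
  have hpos (s : ℂ) (hs : 0 < s.re) : 0 < ∏ j ∈ range (n + 1), ‖s + j‖ :=
    prod_pos fun j _ => norm_pos_iff.mpr fun h => by
      have := congrArg re h
      simp only [add_re, natCast_re, zero_re] at this
      linarith [j.cast_nonneg (α := ℝ)]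
  have hprod :
      (∏ j ∈ range (n + 1), ‖(x : ℂ) + y * I + j‖) * ∏ j ∈ range (n + 1), ‖(1 : ℂ) + j‖
        ≤ (∏ j ∈ range (n + 1), ‖1 + y * I + j‖) * ∏ j ∈ range (n + 1), ‖(x : ℂ) + j‖ := by
    rw [← prod_mul_distrib, ← prod_mul_distrib]
    refine prod_le_prod (fun j _ => by positivity) (fun j _ => ?_)
    rw [← ofReal_one, hshift, hshift, hreal _ _ zero_le_one, hreal _ _ (by linarith)]
    exact norm_ofReal_add_mul_I_mul_le y (by positivity) (by linarith)
  have hre₁ : (1 + y * I : ℂ).re = 1 := by simp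
  have hre : (x + y * I : ℂ).re = x := by simp
  rw [norm_GammaSeq _ hn, norm_GammaSeq _ hn, norm_GammaSeq _ hn, norm_GammaSeq _ hn,
    hre₁, hre, one_re, ofReal_re, div_mul_div_comm, div_mul_div_comm,
    mul_comm (_ * _ : ℝ) (↑n ^ x * _)]
  exact div_le_div_of_nonneg_left (by positivity)
    (mul_pos (hpos _ (by rw [hre]; linarith)) (hpos _ (by simp))) hprod

lemma norm_Gamma_one_add_mul_I_mul_Gamma_le {x : ℝ} (y : ℝ) (hx : 1 ≤ x) :
    ‖Gamma (1 + y * I)‖ * Real.Gamma x ≤ ‖Gamma (x + y * I)‖ := by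
  have hGx : ‖Gamma x‖ = Real.Gamma x := by
    rw [Gamma_ofReal, Complex.norm_of_nonneg (Real.Gamma_pos_of_pos (by linarith)).le]
  have hlim := (GammaSeq_tendsto_Gamma (x + y * I)).norm.mul (GammaSeq_tendsto_Gamma 1).norm
  rw [Gamma_one, norm_one, mul_one] at hlim
  rw [← hGx]
  exact le_of_tendsto_of_tendsto
    ((GammaSeq_tendsto_Gamma _).norm.mul (GammaSeq_tendsto_Gamma _).norm) hlim
    (Filter.eventually_atTop.mpr ⟨1, fun n hn => norm_GammaSeq_one_add_mul_I_mul_le y hx hn⟩)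

lemma exp_neg_mul_Gamma_le_norm_Gamma {x : ℝ} (y : ℝ) (hx : 1 ≤ x) :
    Real.exp (-(π * |y| / 2)) * Real.Gamma x ≤ ‖Gamma (x + y * I)‖ :=
  (mul_le_mul_of_nonneg_right (exp_neg_le_norm_Gamma_one_add_mul_I y)
    (Real.Gamma_pos_of_pos (by linarith)).le).trans (norm_Gamma_one_add_mul_I_mul_Gamma_le y hx)

end Complex

noncomputable def besselITerm (z : ℂ) (y : ℝ) (k : ℕ) : ℂ :=
  ((y : ℂ) / 2) ^ (z + 2 * (k : ℂ)) / (k ! * Gamma (z + k + 1))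

noncomputable def besselIRealTerm (x y : ℝ) (k : ℕ) : ℝ :=
  (y / 2) ^ (x + 2 * k) / (k ! * Real.Gamma (x + k + 1))

lemma ofReal_besselIRealTerm (x : ℝ) {y : ℝ} (hy : 0 ≤ y) (k : ℕ) :
    (besselIRealTerm x y k : ℂ) = besselITerm x y k := by
  rw [besselIRealTerm, besselITerm, ofReal_div, ofReal_mul, ofReal_cpow (by positivity),
    ← Gamma_ofReal]
  push_cast
  rfl

lemma besselI_ofReal_re (x : ℝ) {y : ℝ} (hy : 0 ≤ y) :
    (besselI x y).re = ∑' k, besselIRealTerm x y k := by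
  change (∑' k, besselITerm x y k).re = _
  simp_rw [← ofReal_besselIRealTerm x hy, ← ofReal_tsum, ofReal_re]

lemma summable_besselIRealTerm {x y : ℝ} (hx : 0 ≤ x) (hy : 0 < y) :
    Summable (besselIRealTerm x y) := by
  have hΓ (k : ℕ) : Real.Gamma (x + 1) ≤ Real.Gamma (x + k + 1) :=
    (le_mul_of_one_le_left (Real.Gamma_pos_of_pos (by positivity)).le
      (Nat.one_le_cast.mpr k.factorial_pos)).trans (Real.factorial_mul_Gamma_add_one_le hx k)
  refine .of_nonneg_of_le (fun k => ?_) (fun k => ?_)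
    ((Real.summable_pow_div_factorial ((y / 2) ^ 2)).mul_left ((y / 2) ^ x / Real.Gamma (x + 1)))
  · have := Real.Gamma_pos_of_pos (by positivity : 0 < x + k + 1)
    unfold besselIRealTerm; positivity
  · have hsplit : (y / 2) ^ (x + 2 * k) = (y / 2) ^ x * ((y / 2) ^ 2) ^ k := by
      rw [Real.rpow_add (by positivity), ← pow_mul, ← Real.rpow_natCast]; push_cast; ring_nf
    have := Real.Gamma_pos_of_pos (by positivity : 0 < x + 1)
    calc besselIRealTerm x y k
        = (y / 2) ^ x * ((y / 2) ^ 2) ^ k / (k ! * Real.Gamma (x + k + 1)) := by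
          rw [besselIRealTerm, hsplit]
      _ ≤ (y / 2) ^ x * ((y / 2) ^ 2) ^ k / (k ! * Real.Gamma (x + 1)) := by gcongr; exact hΓ k
      _ = _ := by ring

lemma norm_besselITerm_le {z : ℂ} (hz : 0 ≤ z.re) {y : ℝ} (hy : 0 < y) (k : ℕ) :
    ‖besselITerm z y k‖ ≤ Real.exp (π * |z.im| / 2) * besselIRealTerm z.re y k := by
  have hnum : ‖((y : ℂ) / 2) ^ (z + 2 * (k : ℂ))‖ = (y / 2) ^ (z.re + 2 * k) := by
    rw [← ofReal_ofNat, ← ofReal_div, norm_cpow_eq_rpow_re_of_pos (by positivity)]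
    simp
  set c := π * |z.im| / 2
  have hden : Real.exp (-c) * Real.Gamma (z.re + k + 1) ≤ ‖Gamma (z + k + 1)‖ := by
    have hz' : z + k + 1 = ((z.re + k + 1 : ℝ) : ℂ) + z.im * I := by
      conv_lhs => rw [← re_add_im z]
      push_cast; ring
    rw [hz']
    exact exp_neg_mul_Gamma_le_norm_Gamma _ (by linarith [k.cast_nonneg (α := ℝ)])
  have := Real.Gamma_pos_of_pos (by positivity : 0 < z.re + k + 1)
  calc ‖besselITerm z y k‖ = (y / 2) ^ (z.re + 2 * k) / (k ! * ‖Gamma (z + k + 1)‖) := by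
        rw [besselITerm, norm_div, norm_mul, hnum, norm_natCast]
    _ ≤ (y / 2) ^ (z.re + 2 * k) / (k ! * (Real.exp (-c) * Real.Gamma (z.re + k + 1))) := by
        gcongr
    _ = _ := by
        rw [besselIRealTerm, Real.exp_neg]
        field_simp

/-- for Re z > 0 and y > 0, |I_z(y)| ≤ I_{Re z}(y) · e^{π |Im z|/2}.
Here I_{Re z}(y) is real and positive, expressed as the real part of `besselI` at real order. -/
theorem besselI_norm_le (z : ℂ) (hz : 0 < z.re) (y : ℝ) (hy : 0 < y) :
    ‖besselI z y‖ ≤ (besselI (z.re : ℂ) y).re * Real.exp (Real.pi * |z.im| / 2) := by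
  have hsum := (summable_besselIRealTerm hz.le hy).mul_left (Real.exp (π * |z.im| / 2))
  have hnorm : Summable fun k => ‖besselITerm z y k‖ :=
    .of_nonneg_of_le (fun _ => norm_nonneg _) (norm_besselITerm_le hz.le hy) hsum
  calc ‖besselI z y‖ ≤ ∑' k, ‖besselITerm z y k‖ := norm_tsum_le_tsum_norm hnorm
    _ ≤ ∑' k, Real.exp (π * |z.im| / 2) * besselIRealTerm z.re y k :=
        hnorm.tsum_le_tsum (norm_besselITerm_le hz.le hy) hsum
    _ = _ := by rw [tsum_mul_left, besselI_ofReal_re _ hy.le, mul_comm]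
end

section
/- For complex s with Re s < 1 and real τ, the product Γ(1-s+iτ) Γ(1-s-iτ) equals 2^{2s-1} Γ(2(1-s)) ∫₀^∞ cos(τ y) / cosh^{2(1-s)}(y/2) dy. -/
/-!
With `a = 1 - s`, Euler's formula gives `Γ(a + iτ) Γ(a - iτ) = Γ(2a) B(a + iτ, a - iτ)`.
Substituting `x = σ(y)` (the logistic sigmoid) in the Beta integral, `dx = σ(y) σ(-y) dy`,
`1 - x = σ(-y)` and `σ(±y) = e^{±y/2} / (2 cosh (y/2))`, so
`B(u, v) = ∫_ℝ e^{(u - v) y / 2} (2 cosh (y/2))^{-(u + v)} dy`.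
For `u, v = a ± iτ` the integrand is `e^{iτy}` times an even function, and folding it onto
`(0, ∞)` turns `e^{iτy} + e^{-iτy}` into `2 cos (τy)`.
-/

open MeasureTheory Set Complex

namespace Real

lemma sigmoid_eq_exp_div_two_cosh (y : ℝ) : sigmoid y = exp (y / 2) / (2 * cosh (y / 2)) := by
  have h : exp y = exp (y / 2) ^ 2 := by rw [← exp_nat_mul]; ring_nf
  rw [sigmoid_def, cosh_eq, exp_neg, exp_neg, h]
  field_simp

lemma hasDerivAt_sigmoid' (y : ℝ) : HasDerivAt sigmoid (sigmoid y * sigmoid (-y)) y := by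
  simpa only [sigmoid_neg] using hasDerivAt_sigmoid y

lemma sigmoid_mul_sigmoid_neg_pos (y : ℝ) : 0 < sigmoid y * sigmoid (-y) :=
  mul_pos (sigmoid_pos y) (sigmoid_pos (-y))

end Real

lemma Complex.ofReal_exp_cpow (x : ℝ) (w : ℂ) : (Real.exp x : ℂ) ^ w = cexp (x * w) := by
  rw [cpow_def_of_ne_zero (ofReal_ne_zero.mpr (Real.exp_pos x).ne'),
    ← ofReal_log (Real.exp_pos x).le, Real.log_exp]

lemma sigmoid_cpow_mul_sigmoid_neg_cpow (u v : ℂ) (y : ℝ) :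
    (Real.sigmoid y : ℂ) ^ u * (Real.sigmoid (-y) : ℂ) ^ v =
      cexp ((u - v) * y / 2) / ((2 * Real.cosh (y / 2) : ℝ) : ℂ) ^ (u + v) := by
  have hc : 0 < 2 * Real.cosh (y / 2) := by positivity
  have hc' : ((2 * Real.cosh (y / 2) : ℝ) : ℂ) ≠ 0 := ofReal_ne_zero.mpr hc.ne'
  rw [Real.sigmoid_eq_exp_div_two_cosh, Real.sigmoid_eq_exp_div_two_cosh, neg_div,
    Real.cosh_neg, ofReal_div, ofReal_div, div_cpow_ofReal_nonneg (Real.exp_pos _).le hc.le,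
    div_cpow_ofReal_nonneg (Real.exp_pos _).le hc.le, ofReal_exp_cpow, ofReal_exp_cpow,
    cpow_add _ _ hc', div_mul_div_comm, ← Complex.exp_add]
  congr 2
  push_cast
  ring

section SigmoidSubstitution

variable {E : Type*} [NormedAddCommGroup E] [NormedSpace ℝ E]

lemma integral_Ioo_zero_one_eq_integral_sigmoid (g : ℝ → E) :
    ∫ x in Ioo 0 1, g x = ∫ y, (Real.sigmoid y * Real.sigmoid (-y)) • g (Real.sigmoid y) := by
  have := integral_image_eq_integral_abs_deriv_smul MeasurableSet.univ
    (fun y _ => (Real.hasDerivAt_sigmoid' y).hasDerivWithinAt) Real.sigmoid_injective.injOn g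
  simpa only [image_univ, Real.range_sigmoid, Measure.restrict_univ,
    abs_of_pos (Real.sigmoid_mul_sigmoid_neg_pos _)] using this

lemma integrableOn_Ioo_zero_one_iff_integrable_sigmoid (g : ℝ → E) :
    IntegrableOn g (Ioo 0 1) ↔
      Integrable fun y => (Real.sigmoid y * Real.sigmoid (-y)) • g (Real.sigmoid y) := by
  have := integrableOn_image_iff_integrableOn_abs_deriv_smul MeasurableSet.univ
    (fun y _ => (Real.hasDerivAt_sigmoid' y).hasDerivWithinAt) Real.sigmoid_injective.injOn g
  simpa only [image_univ, Real.range_sigmoid, integrableOn_univ,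
    abs_of_pos (Real.sigmoid_mul_sigmoid_neg_pos _)] using this

lemma integral_eq_integral_Ioi_add_comp_neg {f : ℝ → E} (hf : Integrable f) :
    ∫ y, f y = ∫ y in Ioi 0, (f y + f (-y)) := by
  rw [integral_add hf.integrableOn hf.comp_neg.integrableOn, integral_comp_neg_Ioi, neg_zero,
    ← intervalIntegral.integral_Iic_add_Ioi hf.integrableOn hf.integrableOn, add_comm]

end SigmoidSubstitution

lemma sigmoid_mul_sigmoid_neg_smul_betaIntegrand (u v : ℂ) (y : ℝ) :
    (Real.sigmoid y * Real.sigmoid (-y)) •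
        ((Real.sigmoid y : ℂ) ^ (u - 1) * (1 - (Real.sigmoid y : ℂ)) ^ (v - 1)) =
      (Real.sigmoid y : ℂ) ^ u * (Real.sigmoid (-y) : ℂ) ^ v := by
  have h₁ : (Real.sigmoid y : ℂ) ≠ 0 := ofReal_ne_zero.mpr (Real.sigmoid_pos y).ne'
  have h₂ : (Real.sigmoid (-y) : ℂ) ≠ 0 := ofReal_ne_zero.mpr (Real.sigmoid_pos (-y)).ne'
  have h₃ : 1 - (Real.sigmoid y : ℂ) = Real.sigmoid (-y) := by
    rw [Real.sigmoid_neg, ofReal_sub, ofReal_one]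
  rw [h₃, real_smul, cpow_sub _ _ h₁, cpow_sub _ _ h₂, cpow_one, cpow_one, ofReal_mul]
  field_simp

lemma Complex.betaIntegral_eq_integral_exp_div_two_cosh_cpow (u v : ℂ) :
    betaIntegral u v =
      ∫ y : ℝ, cexp ((u - v) * y / 2) / ((2 * Real.cosh (y / 2) : ℝ) : ℂ) ^ (u + v) := by
  rw [betaIntegral, intervalIntegral.integral_of_le zero_le_one, integral_Ioc_eq_integral_Ioo,
    integral_Ioo_zero_one_eq_integral_sigmoid]
  simp only [sigmoid_mul_sigmoid_neg_smul_betaIntegrand, sigmoid_cpow_mul_sigmoid_neg_cpow]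

lemma integrable_exp_div_two_cosh_cpow {u v : ℂ} (hu : 0 < u.re) (hv : 0 < v.re) :
    Integrable fun y : ℝ =>
      cexp ((u - v) * y / 2) / ((2 * Real.cosh (y / 2) : ℝ) : ℂ) ^ (u + v) := by
  have h := betaIntegral_convergent hu hv
  rw [intervalIntegrable_iff_integrableOn_Ioo_of_le zero_le_one,
    integrableOn_Ioo_zero_one_iff_integrable_sigmoid] at h
  simpa only [sigmoid_mul_sigmoid_neg_smul_betaIntegrand, sigmoid_cpow_mul_sigmoid_neg_cpow] using h

lemma exp_div_two_cosh_cpow_add_comp_neg (a : ℂ) (τ y : ℝ) :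
    cexp (2 * τ * I * y / 2) / ((2 * Real.cosh (y / 2) : ℝ) : ℂ) ^ (2 * a) +
        cexp (2 * τ * I * ↑(-y) / 2) / ((2 * Real.cosh (-y / 2) : ℝ) : ℂ) ^ (2 * a) =
      2 ^ (1 - 2 * a) * ((Real.cos (τ * y) : ℂ) / (Real.cosh (y / 2) : ℂ) ^ (2 * a)) := by
  rw [neg_div, Real.cosh_neg, ofReal_mul, mul_cpow_ofReal_nonneg zero_le_two (Real.cosh_pos _).le,
    cpow_sub _ _ two_ne_zero, cpow_one, ofReal_cos, ofReal_mul, Complex.cos, ofReal_ofNat,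
    ofReal_neg]
  field_simp

lemma betaIntegral_conj_eq_integral_cos_div_cosh_cpow {a : ℂ} (ha : 0 < a.re) (τ : ℝ) :
    betaIntegral (a + τ * I) (a - τ * I) =
      2 ^ (1 - 2 * a) *
        ∫ y in Ioi (0 : ℝ), (Real.cos (τ * y) : ℂ) / (Real.cosh (y / 2) : ℂ) ^ (2 * a) := by
  have hu : 0 < (a + τ * I).re := by simpa using ha
  have hv : 0 < (a - τ * I).re := by simpa using ha
  have hdiff : a + τ * I - (a - τ * I) = 2 * τ * I := by ring
  have hsum : a + τ * I + (a - τ * I) = 2 * a := by ring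
  rw [betaIntegral_eq_integral_exp_div_two_cosh_cpow,
    integral_eq_integral_Ioi_add_comp_neg (integrable_exp_div_two_cosh_cpow hu hv),
    ← integral_const_mul]
  simp only [hdiff, hsum, exp_div_two_cosh_cpow_add_comp_neg]

/-- for Re s < 1 and real τ,
Γ(1-s+iτ) Γ(1-s-iτ) = 2^{2s-1} Γ(2(1-s)) ∫₀^∞ cos(τ y) / cosh^{2(1-s)}(y/2) dy. -/
theorem gamma_product_eq_cosh_integral (s : ℂ) (hs : s.re < 1) (τ : ℝ) :
    Complex.Gamma (1 - s + τ * Complex.I) * Complex.Gamma (1 - s - τ * Complex.I) =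
      (2:ℂ) ^ (2*s - 1) * Complex.Gamma (2*(1 - s)) *
        ∫ y in Set.Ioi (0:ℝ),
          (Real.cos (τ * y) : ℂ) / ((Real.cosh (y/2) : ℂ)) ^ (2*(1 - s)) := by
  have ha : 0 < (1 - s).re := by simpa using hs
  rw [Gamma_mul_Gamma_eq_betaIntegral (by simpa using ha) (by simpa using ha),
    betaIntegral_conj_eq_integral_cos_div_cosh_cpow ha]
  ring_nf
end

section
/- Let α ∈ (0, 1/2) and let g be a function on ℝ such that h(z) := g(z/i) is analytic on the strip |Re z| ≤ α, even (g is even on ℝ), absolutely integrable on every vertical line in the strip, with g(0) = g'(0) = 0, and h(z)/(z sin(2πz)) → 0 appropriately at infinity in the strip. Then for every x > 0: (πi/2) [ ∫_{-α+i∞}^{-α-i∞} + ∫_{α-i∞}^{α+i∞} ] h(z) / ((z - ix) z sin(2πz)) dz = π² g(x) / (x sinh(2πx)). -/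
open MeasureTheory Set Complex

lemma lemA {F : ℂ → ℂ} {S : Set ℂ} {a : ℂ} (hF : DifferentiableOn ℂ F S)
    (hS : S ∈ nhds a) : DifferentiableOn ℂ (dslope F a) S := by
  intro z hz
  rcases eq_or_ne z a with rfl | hza
  · rcases mem_nhds_iff.1 hS with ⟨t, hts, hto, hat⟩
    exact (((differentiableOn_dslope (hto.mem_nhds hat)).mpr (hF.mono hts)) z hat
      |>.differentiableAt (hto.mem_nhds hat)).differentiableWithinAt
  · have hdiff : DifferentiableWithinAt ℂ (fun w => (F w - F a) / (w - a)) S z :=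
      ((hF z hz).sub (differentiableWithinAt_const _)).div
        (differentiableWithinAt_id.sub (differentiableWithinAt_const _))
        (sub_ne_zero.2 hza)
    refine hdiff.congr_of_eventuallyEq ?_ (by rw [dslope_of_ne _ hza, slope_def_field])
    filter_upwards [mem_nhdsWithin_of_mem_nhds (isOpen_compl_singleton.mem_nhds hza)] with w hw
    rw [dslope_of_ne _ hw, slope_def_field]

/-- let α ∈ (0,1/2), g : ℝ → ℂ, and let h be analytic on the strip
|Re z| ≤ α with h(iτ) = g(τ) for real τ (i.e. h(z) = g(z/i)), h even, g even,
absolutely integrable on every vertical line of the strip, g(0) = g'(0) = 0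
(equivalently h(0) = h'(0) = 0) and h(z)/(z sin(2πz)) → 0 as |Im z| → ∞ in the strip.
Then for every x > 0,
(πi/2) [ ∫_{-α+i∞}^{-α-i∞} + ∫_{α-i∞}^{α+i∞} ] h(z)/((z-ix) z sin(2πz)) dz
 = π² g(x)/(x sinh(2πx)).
The downward line Re z = -α contributes -i∫_ℝ and the upward line Re z = α contributes i∫_ℝ. -/
theorem residue_vertical_lines (α : ℝ) (hα : α ∈ Set.Ioo (0:ℝ) (1/2))
    (g : ℝ → ℂ) (h : ℂ → ℂ)
    (hanal : DifferentiableOn ℂ h {z : ℂ | |z.re| ≤ α})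
    (hrel : ∀ τ : ℝ, h ((τ:ℂ) * Complex.I) = g τ)
    (heven : ∀ z : ℂ, h (-z) = h z)
    (hgeven : ∀ τ : ℝ, g (-τ) = g τ)
    (hint : ∀ β : ℝ, |β| ≤ α → Integrable (fun t : ℝ => h ((β:ℂ) + t * Complex.I)))
    (h0 : h 0 = 0) (h0' : deriv h 0 = 0)
    (hdecay : ∀ ε > (0:ℝ), ∃ T : ℝ, ∀ z : ℂ, |z.re| ≤ α → T ≤ |z.im| →
      ‖h z / (z * Complex.sin (2 * Real.pi * z))‖ ≤ ε) :
    ∀ x : ℝ, 0 < x →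
      (Real.pi * Complex.I / 2) *
        ((-Complex.I) * (∫ t : ℝ, h ((-α : ℝ) + t * Complex.I) /
            ((((-α : ℝ) : ℂ) + t * Complex.I - Complex.I * x) * (((-α : ℝ) : ℂ) + t * Complex.I) *
              Complex.sin (2 * Real.pi * (((-α : ℝ) : ℂ) + t * Complex.I)))) +
         Complex.I * (∫ t : ℝ, h ((α : ℝ) + t * Complex.I) /
            ((((α : ℝ) : ℂ) + t * Complex.I - Complex.I * x) * (((α : ℝ) : ℂ) + t * Complex.I) *
              Complex.sin (2 * Real.pi * (((α : ℝ) : ℂ) + t * Complex.I))))) =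
      (Real.pi : ℂ)^2 * g x / ((x : ℂ) * Complex.sinh (2 * Real.pi * x)) := by
  obtain ⟨hα0, hα2⟩ := hα
  intro x hx
  set S : Set ℂ := {z : ℂ | |z.re| ≤ α} with hS_def
  set U : Set ℂ := {z : ℂ | |z.re| < α} with hU_def
  have hUopen : IsOpen U := isOpen_lt (Complex.continuous_re.abs) continuous_const
  have hUS : U ⊆ S := fun z hz => le_of_lt (show |z.re| < α from hz)
  have h0U : (0:ℂ) ∈ U := by simp [hU_def, hα0]
  have hixU : (Complex.I * x) ∈ U := by simp [hU_def, hα0]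
  have hSnhds0 : S ∈ nhds (0:ℂ) := Filter.mem_of_superset (hUopen.mem_nhds h0U) hUS
  have hSnhdsix : S ∈ nhds (Complex.I * x) := Filter.mem_of_superset (hUopen.mem_nhds hixU) hUS
  set s0 : ℂ → ℂ := dslope (fun w => Complex.sin (2 * (Real.pi:ℂ) * w)) 0 with hs0_def
  set p : ℂ → ℂ := dslope (dslope h 0) 0 with hp_def
  set q : ℂ → ℂ := fun z => p z / s0 z with hq_def
  set c : ℂ := q (Complex.I * x) with hc_def
  set G : ℂ → ℂ := dslope q (Complex.I * x) with hG_def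
  -- basic facts
  have hsin_entire : Differentiable ℂ (fun w : ℂ => Complex.sin (2 * (Real.pi:ℂ) * w)) :=
    Complex.differentiable_sin.comp ((differentiable_id.const_mul _))
  have hs0_diff : Differentiable ℂ s0 := by
    rw [← differentiableOn_univ] at hsin_entire ⊢
    exact lemA hsin_entire Filter.univ_mem
  -- sin (2πz) vanishes only at multiples of 1/2
  have hπ : (Real.pi:ℂ) ≠ 0 := Complex.ofReal_ne_zero.mpr Real.pi_ne_zero
  have hsin_ne : ∀ z : ℂ, z ∈ S → z ≠ 0 → Complex.sin (2 * (Real.pi:ℂ) * z) ≠ 0 := by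
    intro z hzS hz0 hsin
    rw [Complex.sin_eq_zero_iff] at hsin
    obtain ⟨k, hk⟩ := hsin
    have hk' : (Real.pi:ℂ) * (2*z) = (Real.pi:ℂ) * k := by linear_combination hk
    have h2 : (2:ℂ) * z = k := mul_left_cancel₀ hπ hk'
    have h2re : (2:ℝ) * z.re = (k:ℝ) := by
      have := congrArg Complex.re h2
      simpa using this
    have hzre : |z.re| ≤ α := hzS
    have hklt : |(k:ℝ)| < 1 := by
      rw [← h2re, abs_mul, show |(2:ℝ)| = 2 by norm_num]
      linarith
    have hk0 : k = 0 := by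
      have h1 : |k| < 1 := by exact_mod_cast hklt
      exact Int.abs_lt_one_iff.mp h1
    apply hz0
    rw [hk0] at h2
    simpa using h2
  have hs0_zero : s0 0 = 2 * Real.pi := by
    have hinner : HasDerivAt (fun w : ℂ => 2 * (Real.pi:ℂ) * w) (2 * (Real.pi:ℂ)) 0 := by
      simpa using (hasDerivAt_id (0:ℂ)).const_mul (2*(Real.pi:ℂ))
    have hD : HasDerivAt (fun w : ℂ => Complex.sin (2 * (Real.pi:ℂ) * w))
        (Complex.cos (2 * (Real.pi:ℂ) * 0) * (2 * (Real.pi:ℂ))) 0 :=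
      (Complex.hasDerivAt_sin _).comp 0 hinner
    rw [hs0_def, dslope_same, hD.deriv]
    simp
  have hs0_eq : ∀ z : ℂ, z ≠ 0 → s0 z = Complex.sin (2 * (Real.pi:ℂ) * z) / z := by
    intro z hz
    rw [hs0_def, dslope_of_ne _ hz, slope_def_field]
    simp
  have hs0_ne_zero : ∀ z ∈ S, s0 z ≠ 0 := by
    intro z hz
    rcases eq_or_ne z 0 with rfl | hne
    · rw [hs0_zero]
      simp [Real.pi_ne_zero]
    · rw [hs0_eq z hne]
      exact div_ne_zero (hsin_ne z hz hne) hne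
  have hp_eq : ∀ z : ℂ, z ≠ 0 → p z = h z / (z * z) := by
    intro z hz
    rw [hp_def, dslope_of_ne _ hz, slope_def_field, dslope_same, h0', sub_zero, sub_zero,
      dslope_of_ne _ hz, slope_def_field, h0, sub_zero, sub_zero, div_div]
  have hq_eq : ∀ z : ℂ, z ≠ 0 → q z = h z / (z * Complex.sin (2 * (Real.pi:ℂ) * z)) := by
    intro z hz
    rw [hq_def]
    simp only
    rw [hp_eq z hz, hs0_eq z hz]
    rw [div_div_div_eq]
    rw [show z * z * sin (2 * (Real.pi:ℂ) * z) = z * (z * sin (2 * (Real.pi:ℂ) * z)) by ring,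
      show h z * z = z * h z from mul_comm _ _, mul_div_mul_left _ _ hz]
  -- differentiability
  have hpS : DifferentiableOn ℂ p S := lemA (lemA hanal hSnhds0) hSnhds0
  have hqS : DifferentiableOn ℂ q S := fun z hz =>
    ((hpS z hz).div (hs0_diff.differentiableAt.differentiableWithinAt) (hs0_ne_zero z hz))
  have hGS : DifferentiableOn ℂ G S := lemA hqS hSnhdsix
  -- line membership facts
  have hline_re : ∀ (β t : ℝ), ((β:ℂ) + t*Complex.I).re = β := by intro β t; simp
  have hline_im : ∀ (β t : ℝ), ((β:ℂ) + t*Complex.I).im = t := by intro β t; simp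
  have hline_mem : ∀ (β t : ℝ), |β| ≤ α → ((β:ℂ) + t*Complex.I) ∈ S := by
    intro β t hβ
    show |((β:ℂ) + t*Complex.I).re| ≤ α
    rw [hline_re]; exact hβ
  have hline_ne0 : ∀ (β t : ℝ), β ≠ 0 → ((β:ℂ) + t*Complex.I) ≠ 0 := by
    intro β t hβ hc0
    apply hβ
    have := congrArg Complex.re hc0
    rwa [hline_re] at this
  have hline_neix : ∀ (β t : ℝ), β ≠ 0 → ((β:ℂ) + t*Complex.I) ≠ Complex.I * x := by
    intro β t hβ hc0
    apply hβ
    have := congrArg Complex.re hc0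
    rw [hline_re] at this
    simpa using this
  have hix_ne0 : (Complex.I * (x:ℂ)) ≠ 0 := by
    intro hc0
    have := congrArg Complex.im hc0
    simp at this
    linarith
  -- the splitting identity
  have hGsplit : ∀ z ∈ S, z ≠ 0 → z ≠ Complex.I * x →
      h z / ((z - Complex.I * x) * z * Complex.sin (2 * (Real.pi:ℂ) * z))
        = G z + c * (z - Complex.I * x)⁻¹ := by
    intro z hz h0z hixz
    have hzix : z - Complex.I * x ≠ 0 := sub_ne_zero.2 hixz
    rw [hG_def, dslope_of_ne _ hixz, slope_def_field, hq_eq z h0z, ← hc_def]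
    field_simp
    ring
  -- value of c
  have hsinh_ne : Complex.sinh (2*(Real.pi:ℂ)*(x:ℂ)) ≠ 0 := by
    rw [show (2*(Real.pi:ℂ)*(x:ℂ)) = ((2*Real.pi*x : ℝ):ℂ) by push_cast; ring,
      ← Complex.ofReal_sinh]
    exact_mod_cast (Real.sinh_pos_iff.mpr (by positivity)).ne'
  have hxne : (x:ℂ) ≠ 0 := Complex.ofReal_ne_zero.mpr hx.ne'
  have hcval : c = - g x / ((x:ℂ) * Complex.sinh (2*(Real.pi:ℂ)*(x:ℂ))) := by
    rw [hc_def, hq_eq _ hix_ne0,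
      show 2*(Real.pi:ℂ)*(Complex.I*(x:ℂ)) = (2*(Real.pi:ℂ)*(x:ℂ))*Complex.I by ring,
      Complex.sin_mul_I, mul_comm Complex.I (x:ℂ), hrel x]
    rw [show ((x:ℂ)*Complex.I) * (Complex.sinh (2*(Real.pi:ℂ)*(x:ℂ)) * Complex.I)
        = -((x:ℂ) * Complex.sinh (2*(Real.pi:ℂ)*(x:ℂ))) by
      rw [mul_mul_mul_comm, Complex.I_mul_I]; ring]
    rw [div_neg, neg_div]
  -- lower bound for the complex sine
  have hsin_lower : ∀ a b : ℝ, |Real.sin a| ≤ ‖Complex.sin ((a:ℂ) + (b:ℂ)*Complex.I)‖ := by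
    intro a b
    have heq : Complex.sin ((a:ℂ) + (b:ℂ)*Complex.I)
        = ((Real.sin a * Real.cosh b : ℝ):ℂ) + ((Real.cos a * Real.sinh b : ℝ):ℂ) * Complex.I := by
      push_cast
      rw [Complex.sin_add, Complex.cos_mul_I, Complex.sin_mul_I]
      ring
    have hre : (Complex.sin ((a:ℂ) + (b:ℂ)*Complex.I)).re = Real.sin a * Real.cosh b := by
      rw [heq]
      simp only [Complex.add_re, Complex.ofReal_re, Complex.mul_re, Complex.ofReal_im,
        Complex.I_re, Complex.I_im]
      ring
    calc |Real.sin a| ≤ |Real.sin a * Real.cosh b| := by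
          rw [abs_mul, abs_of_pos (Real.cosh_pos (x := b))]
          nlinarith [Real.one_le_cosh b, abs_nonneg (Real.sin a)]
      _ = |(Complex.sin ((a:ℂ) + (b:ℂ)*Complex.I)).re| := by rw [hre]
      _ ≤ ‖Complex.sin ((a:ℂ) + (b:ℂ)*Complex.I)‖ := Complex.abs_re_le_norm _
  have hsinα_pos : 0 < Real.sin (2*Real.pi*α) := by
    apply Real.sin_pos_of_pos_of_lt_pi
    · positivity
    · nlinarith [Real.pi_pos]
  -- integrability of the full integrands on the vertical lines
  have key : ∀ β : ℝ, |β| = α → Integrable (fun t : ℝ => h ((β:ℂ) + t * Complex.I) /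
      (((β:ℂ) + t * Complex.I - Complex.I * x) * ((β:ℂ) + t * Complex.I) *
        Complex.sin (2 * (Real.pi:ℂ) * ((β:ℂ) + t * Complex.I)))) := by
    intro β hβ
    have hβα : |β| ≤ α := le_of_eq hβ
    have hβne : β ≠ 0 := by
      intro hc0; rw [hc0] at hβ; simp at hβ; linarith
    have hlinecont : Continuous (fun t : ℝ => (β:ℂ) + t * Complex.I) :=
      continuous_const.add (Complex.continuous_ofReal.mul continuous_const)
    have hhcont : Continuous (fun t : ℝ => h ((β:ℂ) + t * Complex.I)) :=
      (hanal.continuousOn).comp_continuous hlinecont (fun t => hline_mem β t hβα)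
    have hsinabs : |Real.sin (2*Real.pi*β)| = Real.sin (2*Real.pi*α) := by
      rcases (abs_eq (le_of_lt hα0)).mp hβ with rfl | rfl
      · exact abs_of_pos hsinα_pos
      · rw [show 2*Real.pi*(-α) = -(2*Real.pi*α) by ring, Real.sin_neg, abs_neg]
        exact abs_of_pos hsinα_pos
    have hsinline : ∀ t : ℝ, Real.sin (2*Real.pi*α)
        ≤ ‖Complex.sin (2 * (Real.pi:ℂ) * ((β:ℂ) + t * Complex.I))‖ := by
      intro t
      have : (2 * (Real.pi:ℂ) * ((β:ℂ) + t * Complex.I))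
          = ((2*Real.pi*β : ℝ):ℂ) + ((2*Real.pi*t : ℝ):ℂ)*Complex.I := by push_cast; ring
      rw [this, ← hsinabs]
      exact hsin_lower _ _
    have hD0pos : 0 < α * α * Real.sin (2*Real.pi*α) := by positivity
    apply Integrable.mono' (((hint β hβα).norm.const_mul ((α * α * Real.sin (2*Real.pi*α))⁻¹)))
    · apply Continuous.aestronglyMeasurable
      apply hhcont.div
      · apply Continuous.mul
        apply Continuous.mul
        · exact hlinecont.sub continuous_const
        · exact hlinecont
        · exact (Complex.continuous_sin).comp (continuous_const.mul hlinecont)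
      · intro t
        exact mul_ne_zero (mul_ne_zero (sub_ne_zero.2 (hline_neix β t hβne))
          (hline_ne0 β t hβne))
          (hsin_ne _ (hline_mem β t hβα) (hline_ne0 β t hβne))
    · filter_upwards with t
      rw [norm_div, norm_mul, norm_mul]
      rw [inv_mul_eq_div]
      apply div_le_div_of_nonneg_left (norm_nonneg _) hD0pos
      have h1 : α ≤ ‖(β:ℂ) + t * Complex.I - Complex.I * x‖ := by
        have : ((β:ℂ) + t * Complex.I - Complex.I * x).re = β := by simp
        calc α = |β| := hβ.symm
          _ = |((β:ℂ) + t * Complex.I - Complex.I * x).re| := by rw [this]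
          _ ≤ _ := Complex.abs_re_le_norm _
      have h2 : α ≤ ‖(β:ℂ) + t * Complex.I‖ := by
        calc α = |β| := hβ.symm
          _ = |((β:ℂ) + t * Complex.I).re| := by rw [hline_re]
          _ ≤ _ := Complex.abs_re_le_norm _
      have h3 := hsinline t
      have hα' : (0:ℝ) ≤ α := le_of_lt hα0
      calc α * α * Real.sin (2*Real.pi*α)
          ≤ ‖(β:ℂ) + t * Complex.I - Complex.I * x‖ * ‖(β:ℂ) + t * Complex.I‖ *
            ‖Complex.sin (2 * (Real.pi:ℂ) * ((β:ℂ) + t * Complex.I))‖ := by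
            apply mul_le_mul _ h3 (le_of_lt hsinα_pos) (by positivity)
            exact mul_le_mul h1 h2 hα' (norm_nonneg _)
        _ = _ := rfl
  -- the difference kernel
  set r : ℝ → ℝ := fun t => 2*α / (α^2 + (t-x)^2) with hr_def
  have hKpt : ∀ t : ℝ, ((α:ℂ) + t*Complex.I - Complex.I*x)⁻¹
      - (((-α:ℝ):ℂ) + t*Complex.I - Complex.I*x)⁻¹ = ((r t : ℝ):ℂ) := by
    intro t
    have e1 : ((α:ℂ) + t*Complex.I - Complex.I*x) ≠ 0 :=
      sub_ne_zero.2 (hline_neix α t hα0.ne')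
    have e2 : (((-α:ℝ):ℂ) + t*Complex.I - Complex.I*x) ≠ 0 :=
      sub_ne_zero.2 (hline_neix (-α) t (by simpa using hα0.ne'))
    have e3 : ((α:ℂ)^2 + ((t:ℂ)-(x:ℂ))^2) ≠ 0 := by
      rw [show ((α:ℂ)^2 + ((t:ℂ)-(x:ℂ))^2) = ((α^2 + (t-x)^2 : ℝ):ℂ) by push_cast; ring]
      rw [Complex.ofReal_ne_zero]
      positivity
    have hprod : ((α:ℂ) + t*Complex.I - Complex.I*x) * (((-α:ℝ):ℂ) + t*Complex.I - Complex.I*x)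
        = -((α:ℂ)^2 + ((t:ℂ)-(x:ℂ))^2) := by
      push_cast
      linear_combination ((t:ℂ)-(x:ℂ))^2 * Complex.I_sq
    rw [inv_sub_inv e1 e2, hprod]
    rw [show (((-α:ℝ):ℂ) + t*Complex.I - Complex.I*x) - ((α:ℂ) + t*Complex.I - Complex.I*x)
        = -(2*(α:ℂ)) by push_cast; ring]
    rw [neg_div_neg_eq, hr_def]
    push_cast
    ring
  have hr_int : Integrable r := by
    have h1 : Integrable (fun u : ℝ => (1 + (u * α⁻¹)^2)⁻¹) :=
      integrable_inv_one_add_sq.comp_mul_right' (inv_ne_zero hα0.ne')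
    have h2 : Integrable (fun t : ℝ => (1 + ((t - x) * α⁻¹)^2)⁻¹) := h1.comp_sub_right x
    have h3 := h2.const_mul (2/α)
    apply h3.congr
    filter_upwards with t
    rw [hr_def]
    field_simp
  have hr_integral : ∫ t : ℝ, r t = 2 * Real.pi := by
    have hrw : r = fun t : ℝ => (2/α) * ((fun u : ℝ => (1 + (u/α)^2)⁻¹) ((t - x))) := by
      funext t
      rw [hr_def]
      field_simp
    rw [hrw, MeasureTheory.integral_const_mul,
      MeasureTheory.integral_sub_right_eq_self (fun u : ℝ => (1 + (u/α)^2)⁻¹) x,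
      MeasureTheory.Measure.integral_comp_div (fun u : ℝ => (1 + u^2)⁻¹) α,
      integral_univ_inv_one_add_sq, abs_of_pos hα0, smul_eq_mul]
    field_simp
  -- M : the difference of G along the two vertical lines
  set M : ℝ → ℂ := fun t => G ((α:ℂ) + t*Complex.I) - G (((-α:ℝ):ℂ) + t*Complex.I) with hM_def
  have hαabs : |α| = α := abs_of_pos hα0
  have hnegαabs : |(-α)| = α := by rw [abs_neg]; exact hαabs
  have hsplitR : ∀ t : ℝ, h ((α:ℂ) + t * Complex.I) /
      (((α:ℂ) + t * Complex.I - Complex.I * x) * ((α:ℂ) + t * Complex.I) *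
        Complex.sin (2 * (Real.pi:ℂ) * ((α:ℂ) + t * Complex.I)))
      = G ((α:ℂ) + t*Complex.I) + c * ((α:ℂ) + t*Complex.I - Complex.I*x)⁻¹ :=
    fun t => hGsplit _ (hline_mem α t hαabs.le) (hline_ne0 α t hα0.ne')
      (hline_neix α t hα0.ne')
  have hsplitL : ∀ t : ℝ, h (((-α:ℝ):ℂ) + t * Complex.I) /
      ((((-α:ℝ):ℂ) + t * Complex.I - Complex.I * x) * (((-α:ℝ):ℂ) + t * Complex.I) *
        Complex.sin (2 * (Real.pi:ℂ) * (((-α:ℝ):ℂ) + t * Complex.I)))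
      = G (((-α:ℝ):ℂ) + t*Complex.I) + c * (((-α:ℝ):ℂ) + t*Complex.I - Complex.I*x)⁻¹ :=
    fun t => hGsplit _ (hline_mem (-α) t hnegαabs.le)
      (hline_ne0 (-α) t (by simpa using hα0.ne')) (hline_neix (-α) t (by simpa using hα0.ne'))
  have hdiff_pt : ∀ t : ℝ, h ((α:ℂ) + t * Complex.I) /
      (((α:ℂ) + t * Complex.I - Complex.I * x) * ((α:ℂ) + t * Complex.I) *
        Complex.sin (2 * (Real.pi:ℂ) * ((α:ℂ) + t * Complex.I)))
      - h (((-α:ℝ):ℂ) + t * Complex.I) /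
      ((((-α:ℝ):ℂ) + t * Complex.I - Complex.I * x) * (((-α:ℝ):ℂ) + t * Complex.I) *
        Complex.sin (2 * (Real.pi:ℂ) * (((-α:ℝ):ℂ) + t * Complex.I)))
      = M t + c * ((r t : ℝ):ℂ) := by
    intro t
    rw [hsplitR t, hsplitL t, hM_def, ← hKpt t]
    ring
  have keyR := key α hαabs
  have keyL := key (-α) hnegαabs
  have hrc_int : Integrable (fun t : ℝ => c * ((r t : ℝ):ℂ)) := (hr_int.ofReal.const_mul c)
  have hM_int : Integrable M := by
    apply ((keyR.sub keyL).sub hrc_int).congr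
    filter_upwards with t
    simp only [Pi.sub_apply]
    rw [hdiff_pt t]
    ring
  -- continuity of G along lines
  have hGcont_line : ∀ β : ℝ, |β| ≤ α → Continuous (fun t : ℝ => G ((β:ℂ) + t*Complex.I)) := by
    intro β hβ
    exact (hGS.continuousOn).comp_continuous
      (continuous_const.add (Complex.continuous_ofReal.mul continuous_const))
      (fun t => hline_mem β t hβ)
  -- the rectangle identity
  have hGU : DifferentiableOn ℂ G U := hGS.mono hUS
  have hrect : ∀ T : ℝ, 0 < T →
      Complex.I • ((∫ t in (-T)..T, G ((α:ℂ) + t*Complex.I))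
          - ∫ t in (-T)..T, G (((-α:ℝ):ℂ) + t*Complex.I))
        = (∫ s in (-α:ℝ)..α, G ((s:ℂ) + ((T:ℝ):ℂ)*Complex.I))
          - ∫ s in (-α:ℝ)..α, G ((s:ℂ) + ((-T:ℝ):ℂ)*Complex.I) := by
    intro T hT
    have H := Complex.integral_boundary_rect_eq_zero_of_differentiable_on_off_countable G
      (((-α:ℝ):ℂ) + ((-T:ℝ):ℂ)*Complex.I) ((α:ℂ) + ((T:ℝ):ℂ)*Complex.I) ∅ countable_empty
      ?hc ?hd
    case hc =>
      apply hGS.continuousOn.mono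
      intro w hw
      rw [mem_reProdIm] at hw
      obtain ⟨hw1, _⟩ := hw
      rw [hline_re, hline_re, Set.uIcc_of_le (by linarith : -α ≤ α)] at hw1
      show |w.re| ≤ α
      rw [abs_le]
      exact ⟨hw1.1, hw1.2⟩
    case hd =>
      intro u hu
      obtain ⟨hu1, _⟩ := hu
      rw [mem_reProdIm] at hu1
      obtain ⟨hw1, _⟩ := hu1
      rw [hline_re, hline_re, min_eq_left (by linarith : -α ≤ α),
        max_eq_right (by linarith : -α ≤ α)] at hw1
      have huU : u ∈ U := by
        show |u.re| < α
        rw [abs_lt]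
        exact ⟨hw1.1, hw1.2⟩
      exact (hGU u huU).differentiableAt (hUopen.mem_nhds huU)
    rw [hline_re, hline_re, hline_im, hline_im] at H
    simp only [smul_eq_mul] at H ⊢
    linear_combination H
  -- decay bound for G far from the real axis
  obtain ⟨T₀, hT₀⟩ := hdecay 1 one_pos
  set T₁ : ℝ := max T₀ (x + 1) with hT₁_def
  have hT₁pos : 0 < T₁ := lt_of_lt_of_le (by linarith) (le_max_right _ _)
  have hGbound : ∀ z ∈ S, T₁ ≤ |z.im| → ‖G z‖ ≤ (1 + ‖c‖) / (|z.im| - x) := by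
    intro z hz hzT
    have him : x + 1 ≤ |z.im| := le_trans (le_max_right _ _) hzT
    have hzne0 : z ≠ 0 := by
      intro h0z; rw [h0z] at him; simp at him; linarith
    have hzneix : z ≠ Complex.I * x := by
      intro hzix
      rw [hzix] at him
      have hIm : (Complex.I * (x:ℂ)).im = x := by simp
      rw [hIm, abs_of_pos hx] at him
      linarith
    have hq1 : ‖q z‖ ≤ 1 := by
      rw [hq_eq z hzne0]
      exact hT₀ z hz (le_trans (le_max_left _ _) hzT)
    have hden : |z.im| - x ≤ ‖z - Complex.I * x‖ := by
      have h1 : |(z - Complex.I*x).im| ≤ ‖z - Complex.I*x‖ := Complex.abs_im_le_norm _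
      have h2 : (z - Complex.I*x).im = z.im - x := by simp
      calc |z.im| - x = |z.im| - |x| := by rw [abs_of_pos hx]
        _ ≤ |z.im - x| := abs_sub_abs_le_abs_sub _ _
        _ = |(z - Complex.I*x).im| := by rw [h2]
        _ ≤ _ := h1
    have hpos : 0 < |z.im| - x := by linarith
    rw [hG_def, dslope_of_ne _ hzneix, slope_def_field, ← hc_def, norm_div]
    apply div_le_div₀ (by positivity) _ hpos hden
    calc ‖q z - c‖ ≤ ‖q z‖ + ‖c‖ := norm_sub_le _ _
      _ ≤ 1 + ‖c‖ := by linarith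
  -- horizontal edge estimate
  have hedge : ∀ b : ℝ, T₁ ≤ |b| →
      ‖∫ s in (-α:ℝ)..α, G ((s:ℂ) + (b:ℂ)*Complex.I)‖ ≤ (1+‖c‖)/(|b| - x) * (2*α) := by
    intro b hb
    have hCpos : 0 ≤ (1+‖c‖)/(|b| - x) := by
      apply div_nonneg (by positivity)
      have : x + 1 ≤ |b| := le_trans (le_max_right _ _) hb
      linarith
    have hbnd := intervalIntegral.norm_integral_le_of_norm_le_const
      (C := (1+‖c‖)/(|b|-x)) (f := fun s : ℝ => G ((s:ℂ)+(b:ℂ)*Complex.I))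
      (a := (-α:ℝ)) (b := α) ?_
    · calc ‖∫ s in (-α:ℝ)..α, G ((s:ℂ) + (b:ℂ)*Complex.I)‖
          ≤ (1+‖c‖)/(|b|-x) * |α - (-α)| := hbnd
        _ = (1+‖c‖)/(|b|-x) * (2*α) := by
            rw [show α - (-α) = 2*α by ring, abs_of_pos (by linarith : (0:ℝ) < 2*α)]
    · intro s hs
      rw [Set.uIoc_of_le (by linarith : -α ≤ α)] at hs
      have hsα : |s| ≤ α := by
        rw [abs_le]
        exact ⟨le_of_lt hs.1, hs.2⟩
      have hmem : ((s:ℂ) + (b:ℂ)*Complex.I) ∈ S := hline_mem s b hsα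
      have := hGbound _ hmem (by rw [hline_im]; exact hb)
      rwa [hline_im] at this
  -- the truncated integral of M and its bound
  have hJbound : ∀ T : ℝ, T₁ ≤ T →
      ‖∫ t in (-T)..T, M t‖ ≤ (1+‖c‖)/(T - x) * (2*α) + (1+‖c‖)/(T - x) * (2*α) := by
    intro T hT
    have hTpos : 0 < T := lt_of_lt_of_le hT₁pos hT
    have hsub : (∫ t in (-T)..T, M t)
        = (∫ t in (-T)..T, G ((α:ℂ) + t*Complex.I))
          - ∫ t in (-T)..T, G (((-α:ℝ):ℂ) + t*Complex.I) := by
      rw [hM_def]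
      exact intervalIntegral.integral_sub
        (((hGcont_line α hαabs.le)).intervalIntegrable _ _)
        (((hGcont_line (-α) hnegαabs.le)).intervalIntegrable _ _)
    have hnorm : ‖∫ t in (-T)..T, M t‖
        = ‖(∫ s in (-α:ℝ)..α, G ((s:ℂ) + ((T:ℝ):ℂ)*Complex.I))
            - ∫ s in (-α:ℝ)..α, G ((s:ℂ) + ((-T:ℝ):ℂ)*Complex.I)‖ := by
      rw [hsub, ← hrect T hTpos, norm_smul, Complex.norm_I, one_mul]
    rw [hnorm]
    have habs : |T| = T := abs_of_pos hTpos
    have hnabs : |(-T)| = T := by rw [abs_neg]; exact habs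
    calc ‖(∫ s in (-α:ℝ)..α, G ((s:ℂ) + ((T:ℝ):ℂ)*Complex.I))
            - ∫ s in (-α:ℝ)..α, G ((s:ℂ) + ((-T:ℝ):ℂ)*Complex.I)‖
        ≤ ‖∫ s in (-α:ℝ)..α, G ((s:ℂ) + ((T:ℝ):ℂ)*Complex.I)‖
          + ‖∫ s in (-α:ℝ)..α, G ((s:ℂ) + ((-T:ℝ):ℂ)*Complex.I)‖ := norm_sub_le _ _
      _ ≤ (1+‖c‖)/(T - x) * (2*α) + (1+‖c‖)/(T - x) * (2*α) := by
          apply add_le_add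
          · have := hedge T (by rw [habs]; exact hT)
            rwa [habs] at this
          · have := hedge (-T) (by rw [hnabs]; exact hT)
            rwa [hnabs] at this
  -- limits
  have hlim1 : Filter.Tendsto (fun T : ℝ => ∫ t in (-T)..T, M t) Filter.atTop (nhds (∫ t, M t)) :=
    intervalIntegral_tendsto_integral hM_int Filter.tendsto_neg_atTop_atBot Filter.tendsto_id
  have hlim0 : Filter.Tendsto (fun T : ℝ => ∫ t in (-T)..T, M t) Filter.atTop (nhds 0) := by
    apply squeeze_zero_norm' (a := fun T : ℝ => (1+‖c‖)/(T - x) * (2*α) + (1+‖c‖)/(T - x) * (2*α))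
    · filter_upwards [Filter.eventually_ge_atTop T₁] with T hT
      exact hJbound T hT
    · have hsx : Filter.Tendsto (fun T : ℝ => T - x) Filter.atTop Filter.atTop :=
        Filter.tendsto_atTop_add_const_right _ _ Filter.tendsto_id
      have h0 : Filter.Tendsto (fun T : ℝ => (T - x)⁻¹) Filter.atTop (nhds 0) :=
        hsx.inv_tendsto_atTop
      have h1 := (h0.const_mul (1+‖c‖)).mul_const (2*α)
      simpa [div_eq_mul_inv] using h1.add h1
  have hM0 : (∫ t, M t) = 0 := tendsto_nhds_unique hlim1 hlim0
  -- final computation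
  have h1 : (∫ t : ℝ, h ((α:ℂ) + t * Complex.I) /
        (((α:ℂ) + t * Complex.I - Complex.I * x) * ((α:ℂ) + t * Complex.I) *
          Complex.sin (2 * (Real.pi:ℂ) * ((α:ℂ) + t * Complex.I))))
      - (∫ t : ℝ, h (((-α:ℝ):ℂ) + t * Complex.I) /
        ((((-α:ℝ):ℂ) + t * Complex.I - Complex.I * x) * (((-α:ℝ):ℂ) + t * Complex.I) *
          Complex.sin (2 * (Real.pi:ℂ) * (((-α:ℝ):ℂ) + t * Complex.I))))
      = c * ((2*Real.pi : ℝ):ℂ) := by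
    rw [← integral_sub keyR keyL]
    have heq : (fun t : ℝ => h ((α:ℂ) + t * Complex.I) /
        (((α:ℂ) + t * Complex.I - Complex.I * x) * ((α:ℂ) + t * Complex.I) *
          Complex.sin (2 * (Real.pi:ℂ) * ((α:ℂ) + t * Complex.I)))
        - h (((-α:ℝ):ℂ) + t * Complex.I) /
        ((((-α:ℝ):ℂ) + t * Complex.I - Complex.I * x) * (((-α:ℝ):ℂ) + t * Complex.I) *
          Complex.sin (2 * (Real.pi:ℂ) * (((-α:ℝ):ℂ) + t * Complex.I))))
        = fun t : ℝ => M t + c * ((r t : ℝ):ℂ) := funext hdiff_pt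
    rw [heq, integral_add hM_int hrc_int, hM0, MeasureTheory.integral_const_mul]
    have hoi : ∫ (a:ℝ), ((r a : ℝ):ℂ) = ((∫ a : ℝ, r a : ℝ):ℂ) := integral_ofReal
    rw [hoi, hr_integral]
    ring
  have hfinal : (-Complex.I) * (∫ t : ℝ, h (((-α:ℝ):ℂ) + t * Complex.I) /
        ((((-α:ℝ):ℂ) + t * Complex.I - Complex.I * x) * (((-α:ℝ):ℂ) + t * Complex.I) *
          Complex.sin (2 * (Real.pi:ℂ) * (((-α:ℝ):ℂ) + t * Complex.I))))
      + Complex.I * (∫ t : ℝ, h ((α:ℂ) + t * Complex.I) /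
        (((α:ℂ) + t * Complex.I - Complex.I * x) * ((α:ℂ) + t * Complex.I) *
          Complex.sin (2 * (Real.pi:ℂ) * ((α:ℂ) + t * Complex.I))))
      = Complex.I * (c * ((2*Real.pi : ℝ):ℂ)) := by
    linear_combination Complex.I * h1
  rw [hfinal]
  have hII : ∀ w : ℂ, ((Real.pi:ℂ) * Complex.I / 2) * (Complex.I * w)
      = -((Real.pi:ℂ)/2) * w := by
    intro w
    linear_combination ((Real.pi:ℂ) * w / 2) * Complex.I_sq
  rw [hII, hcval]
  push_cast
  have hds : (x:ℂ) * Complex.sinh (2*(Real.pi:ℂ)*(x:ℂ)) ≠ 0 := mul_ne_zero hxne hsinh_ne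
  field_simp
end
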